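/- Assume the payoff parameters satisfy p1 > p3 > p4 > p2 and p1 + p2 > 2·p3 (stag hunt conditions). Let S₀ be a configuration on the toroidal grid G_{N,M} (N, M ≥ 3) for which there exists (i,j) ∈ V with S₀(i,j) = S₀(i+1,j) = S₀(i,j+1) = S₀(i+1,j+1) = C. Then the singleton {S_C} is reachable from S₀ under the CEG within N + M steps. -/

import Mathlib

/-!
Under the stag-hunt inequalities a cooperator with at least two cooperating neighbours earns at
least `2 p1 + 2 p2 > 4 p3`, which is more than any defector can earn. Hence, starting from an
`a × b` rectangle of cooperators with `a, b ≥ 2`, one controlled step can keep every cooperator of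
the rectangle cooperating (each imitates a cooperating neighbour inside the rectangle) while the
whole row or column next to it imitates the rectangle's boundary, whose nodes have two cooperating
neighbours. Growing the initial `2 × 2` square by one row or column per step fills the torus in
`(N - 2) + (M - 2)` steps.
-/

open MeasureTheory

namespace EvolGame

/-- A strategy: cooperation `C` or defection `D`. -/
inductive Strat : Type
  | C : Strat
  | D : Strat
  deriving DecidableEq

/-- Node set of the toroidal grid `G_{N,M}`. -/
abbrev Node (N M : ℕ) := ZMod N × ZMod M

/-- A strategy configuration. -/
abbrev Config (N M : ℕ) := Node N M → Strat

/-- Adjacency on the toroidal grid. -/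
def adj {N M : ℕ} (u v : Node N M) : Prop :=
  u - v = (1, 0) ∨ u - v = (-1, 0) ∨ u - v = (0, 1) ∨ u - v = (0, -1)

/-- The (at most four) neighbors of a node. -/
def neighbors {N M : ℕ} (v : Node N M) : Finset (Node N M) :=
  {v + (1, 0), v + (-1, 0), v + (0, 1), v + (0, -1)}

/-- Number of cooperating neighbors of `v` under configuration `S`. -/
def coopCount {N M : ℕ} (S : Config N M) (v : Node N M) : ℕ :=
  ((neighbors v).filter (fun u => S u = Strat.C)).card

/-- Payoff of node `v` under configuration `S` with payoff parameters `p1,p2,p3,p4`. -/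
def payoff (p1 p2 p3 p4 : ℝ) {N M : ℕ} (S : Config N M) (v : Node N M) : ℝ :=
  if S v = Strat.C then
    (coopCount S v : ℝ) * p1 + (4 - (coopCount S v : ℝ)) * p2
  else
    (coopCount S v : ℝ) * p3 + (4 - (coopCount S v : ℝ)) * p4

/-- A control assigns to each node one of its neighbors. -/
def IsControl {N M : ℕ} (c : Node N M → Node N M) : Prop :=
  ∀ v, adj (c v) v

open Classical in
/-- The controlled update `F(S,c)`. -/
noncomputable def F (p1 p2 p3 p4 : ℝ) {N M : ℕ} (S : Config N M)
    (c : Node N M → Node N M) : Config N M :=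
  fun v =>
    if payoff p1 p2 p3 p4 S v < payoff p1 p2 p3 p4 S (c v) then S (c v) else S v

/-- The set `R(S)` of configurations reachable from `S` in one imitation step. -/
def Rset (p1 p2 p3 p4 : ℝ) {N M : ℕ} (S : Config N M) : Set (Config N M) :=
  {S' | ∀ v, S' v = S v ∨
    ∃ u, adj u v ∧ S' v = S u ∧ payoff p1 p2 p3 p4 S v < payoff p1 p2 p3 p4 S u}

/-- `Ω*`: adjacent nodes with different strategies have equal payoffs. -/
def OmegaStar (p1 p2 p3 p4 : ℝ) (N M : ℕ) : Set (Config N M) :=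
  {S | ∀ u v, adj u v → S u ≠ S v →
    payoff p1 p2 p3 p4 S u = payoff p1 p2 p3 p4 S v}

/-- Controlled trajectory of the CEG. -/
noncomputable def traj (p1 p2 p3 p4 : ℝ) {N M : ℕ} (S0 : Config N M)
    (c : ℕ → Node N M → Node N M) : ℕ → Config N M
  | 0 => S0
  | t + 1 => F p1 p2 p3 p4 (traj p1 p2 p3 p4 S0 c t) (c t)

/-- `A` is reachable from `S0` under the CEG within `T` steps. -/
def ReachableWithin (p1 p2 p3 p4 : ℝ) {N M : ℕ} (A : Set (Config N M))
    (S0 : Config N M) (T : ℕ) : Prop :=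
  ∃ t ≤ T, ∃ c : ℕ → Node N M → Node N M,
    (∀ s, IsControl (c s)) ∧ traj p1 p2 p3 p4 S0 c t ∈ A

/-- The discrete σ-algebra on the finite configuration space. -/
instance {N M : ℕ} : MeasurableSpace (Config N M) := ⊤

/-- `μ` is the law of the time-homogeneous Markov chain with kernel `κ` started
at `S0`, characterized by its finite-dimensional (cylinder) distributions. -/
def IsChainLaw {N M : ℕ} (κ : Config N M → PMF (Config N M)) (S0 : Config N M)
    (μ : Measure (ℕ → Config N M)) : Prop :=
  IsProbabilityMeasure μ ∧
  ∀ (t : ℕ) (s : ℕ → Config N M), s 0 = S0 →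
    μ {ω | ∀ i ≤ t, ω i = s i} = ∏ i ∈ Finset.range t, κ (s i) (s (i + 1))

/-- An admissible imitation kernel with margin `ε`. -/
def IsAdmissible (p1 p2 p3 p4 : ℝ) {N M : ℕ} (ε : ℝ)
    (κ : Config N M → PMF (Config N M)) : Prop :=
  (∀ (S : Config N M) (c : Node N M → Node N M), IsControl c →
      ENNReal.ofReal ε ≤ κ S (F p1 p2 p3 p4 S c)) ∧
  (∀ S : Config N M, ∑' S' : Rset p1 p2 p3 p4 S, κ S (S' : Config N M) = 1)

open Classical in
/-- The `W`-frozen controlled update. -/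
noncomputable def FW (p1 p2 p3 p4 : ℝ) {N M : ℕ} (W : Set (Node N M))
    (S : Config N M) (c : Node N M → Node N M) : Config N M :=
  fun v => if v ∈ W then S v else F p1 p2 p3 p4 S c v

/-- The `W`-frozen one-step reach set `R_W(S)`. -/
def RsetW (p1 p2 p3 p4 : ℝ) {N M : ℕ} (W : Set (Node N M)) (S : Config N M) :
    Set (Config N M) :=
  {S' | (∀ v ∈ W, S' v = S v) ∧
    ∀ v ∉ W, S' v = S v ∨
      ∃ u, adj u v ∧ S' v = S u ∧ payoff p1 p2 p3 p4 S v < payoff p1 p2 p3 p4 S u}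

/-- Controlled trajectory of the `W`-frozen CEG. -/
noncomputable def trajW (p1 p2 p3 p4 : ℝ) {N M : ℕ} (W : Set (Node N M))
    (S0 : Config N M) (c : ℕ → Node N M → Node N M) : ℕ → Config N M
  | 0 => S0
  | t + 1 => FW p1 p2 p3 p4 W (trajW p1 p2 p3 p4 W S0 c t) (c t)

/-- `A` is reachable from `S0` under the `W`-frozen CEG within `T` steps. -/
def ReachableWithinW (p1 p2 p3 p4 : ℝ) {N M : ℕ} (W : Set (Node N M))
    (A : Set (Config N M)) (S0 : Config N M) (T : ℕ) : Prop :=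
  ∃ t ≤ T, ∃ c : ℕ → Node N M → Node N M,
    (∀ s, IsControl (c s)) ∧ trajW p1 p2 p3 p4 W S0 c t ∈ A

/-- A `W`-frozen admissible imitation kernel with margin `ε`. -/
def IsAdmissibleW (p1 p2 p3 p4 : ℝ) {N M : ℕ} (W : Set (Node N M)) (ε : ℝ)
    (κ : Config N M → PMF (Config N M)) : Prop :=
  (∀ (S : Config N M) (c : Node N M → Node N M), IsControl c →
      ENNReal.ofReal ε ≤ κ S (FW p1 p2 p3 p4 W S c)) ∧
  (∀ S : Config N M, ∑' S' : RsetW p1 p2 p3 p4 W S, κ S (S' : Config N M) = 1)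

variable {N M : ℕ}

section Grid

lemma adj_iff_adj_sub_zero {u v : Node N M} : adj u v ↔ adj (u - v) 0 := by
  simp only [adj, sub_zero]

lemma adj_add_self {v e : Node N M} (he : adj e 0) : adj (v + e) v := by
  rwa [adj_iff_adj_sub_zero, add_sub_cancel_left]

lemma adj_neg_zero {e : Node N M} (he : adj e 0) : adj (-e) 0 := by
  simp only [adj, sub_zero] at he ⊢
  rcases he with rfl | rfl | rfl | rfl <;> simp

lemma mem_neighbors_of_adj {u v : Node N M} (h : adj u v) : u ∈ neighbors v := by
  simp only [adj, neighbors, Finset.mem_insert, Finset.mem_singleton] at h ⊢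
  rcases h with h | h | h | h <;> simp [← h]

lemma coopCount_le_four (S : Config N M) (v : Node N M) : coopCount S v ≤ 4 :=
  (Finset.card_filter_le _ _).trans Finset.card_le_four

lemma two_le_coopCount {S : Config N M} {u x y : Node N M} (hxy : x ≠ y)
    (hx : adj x u) (hy : adj y u) (hSx : S x = .C) (hSy : S y = .C) : 2 ≤ coopCount S u := by
  calc 2 = ({x, y} : Finset (Node N M)).card := (Finset.card_pair hxy).symm
    _ ≤ coopCount S u := Finset.card_le_card <| by
      simp only [Finset.insert_subset_iff, Finset.singleton_subset_iff, Finset.mem_filter]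
      exact ⟨⟨mem_neighbors_of_adj hx, hSx⟩, mem_neighbors_of_adj hy, hSy⟩

end Grid

section Payoff

variable {p1 p2 p3 p4 : ℝ}

lemma payoff_lt_of_two_le_coopCount (h34 : p4 < p3) (h42 : p2 < p4) (hsum : 2 * p3 < p1 + p2)
    {S : Config N M} {u v : Node N M} (hu : S u = .C) (hv : S v = .D)
    (hk : 2 ≤ coopCount S u) : payoff p1 p2 p3 p4 S v < payoff p1 p2 p3 p4 S u := by
  have hk' : (2 : ℝ) ≤ coopCount S u := by exact_mod_cast hk
  have hm : (coopCount S v : ℝ) ≤ 4 := by exact_mod_cast coopCount_le_four S v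
  have hm' : (0 : ℝ) ≤ coopCount S v := Nat.cast_nonneg _
  have hD : payoff p1 p2 p3 p4 S v ≤ 4 * p3 := by
    simp only [payoff, hv, reduceCtorEq, if_false]
    nlinarith
  have hC : 2 * p1 + 2 * p2 ≤ payoff p1 p2 p3 p4 S u := by
    simp only [payoff, hu, if_true]
    nlinarith
  linarith

lemma F_apply_eq_of_eq {S : Config N M} {c : Node N M → Node N M} {v : Node N M}
    (h : S (c v) = S v) : F p1 p2 p3 p4 S c v = S v := by
  unfold F
  split_ifs <;> simp [h]

lemma F_apply_eq_C_of_two_le_coopCount (h34 : p4 < p3) (h42 : p2 < p4)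
    (hsum : 2 * p3 < p1 + p2) {S : Config N M} {c : Node N M → Node N M} {v : Node N M}
    (hc : S (c v) = .C) (hk : 2 ≤ coopCount S (c v)) : F p1 p2 p3 p4 S c v = .C := by
  cases hv : S v with
  | C => rw [F_apply_eq_of_eq (hc.trans hv.symm), hv]
  | D =>
    unfold F
    rw [if_pos (payoff_lt_of_two_le_coopCount h34 h42 hsum hc hv hk), hc]

lemma exists_control_F_eq_C (h34 : p4 < p3) (h42 : p2 < p4) (hsum : 2 * p3 < p1 + p2)
    (S : Config N M) (T : Set (Node N M))
    (hT : ∀ v ∈ T, ∃ u, adj u v ∧ S u = .C ∧ (S v = .C ∨ 2 ≤ coopCount S u)) :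
    ∃ c, IsControl c ∧ T ⊆ {v | F p1 p2 p3 p4 S c v = .C} := by
  have hu : ∀ v, ∃ u, adj u v ∧ (v ∈ T → S u = .C ∧ (S v = .C ∨ 2 ≤ coopCount S u)) := by
    intro v
    by_cases hv : v ∈ T
    · obtain ⟨u, huv, hSu⟩ := hT v hv
      exact ⟨u, huv, fun _ => hSu⟩
    · exact ⟨v + (1, 0), adj_add_self (Or.inl (sub_zero _)), fun h => absurd h hv⟩
  choose c hadj hc using hu
  refine ⟨c, hadj, fun v hv => ?_⟩
  obtain ⟨hCu, hv | hk⟩ := hc v hv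
  · exact (F_apply_eq_of_eq (hCu.trans hv.symm)).trans hv
  · exact F_apply_eq_C_of_two_le_coopCount h34 h42 hsum hCu hk

end Payoff

section Rectangle

def rect (v0 e f : Node N M) (a b : ℕ) : Set (Node N M) :=
  {v | ∃ k < a, ∃ l < b, v = v0 + k • e + l • f}

lemma rect_comm (v0 e f : Node N M) (a b : ℕ) : rect v0 e f a b = rect v0 f e b a := by
  ext v
  constructor <;> rintro ⟨k, hk, l, hl, rfl⟩ <;> exact ⟨l, hl, k, hk, add_right_comm _ _ _⟩

lemma rect_eq_univ [NeZero N] [NeZero M] (v0 : Node N M) {a b : ℕ} (ha : N ≤ a) (hb : M ≤ b) :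
    rect v0 (1, 0) (0, 1) a b = Set.univ := by
  refine Set.eq_univ_of_forall fun w => ⟨(w - v0).1.val, (ZMod.val_lt _).trans_le ha,
    (w - v0).2.val, (ZMod.val_lt _).trans_le hb, ?_⟩
  ext <;> simp

lemma exists_add_mem_rect {v0 e f : Node N M} {a b k l : ℕ} (ha : 2 ≤ a) (hk : k < a)
    (hl : l < b) : ∃ s, (s = e ∨ s = -e) ∧ v0 + k • e + l • f + s ∈ rect v0 e f a b := by
  by_cases hk' : k + 1 < a
  · exact ⟨e, Or.inl rfl, k + 1, hk', l, hl, by module⟩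
  · obtain ⟨k, rfl⟩ : ∃ k', k = k' + 1 := ⟨k - 1, by omega⟩
    exact ⟨-e, Or.inr rfl, k, by omega, l, hl, by module⟩

variable {p1 p2 p3 p4 : ℝ}

/-- The partner of a new node `v0 + k • e + (l + 2) • f` is `v0 + k • e + (l + 1) • f`, whose
neighbours `v0 + k • e + l • f` and one of its `± e` neighbours lie in the rectangle; they are
distinct because `f ≠ ± e`. -/
lemma exists_control_rect_succ (h34 : p4 < p3) (h42 : p2 < p4) (hsum : 2 * p3 < p1 + p2)
    {v0 e f : Node N M} (he : adj e 0) (hf : adj f 0) (hfe : f ≠ e) (hfne : f ≠ -e)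
    {a b : ℕ} (ha : 2 ≤ a) (hb : 2 ≤ b) {S : Config N M}
    (hS : rect v0 e f a b ⊆ {v | S v = .C}) :
    ∃ c, IsControl c ∧ rect v0 e f a (b + 1) ⊆ {v | F p1 p2 p3 p4 S c v = .C} := by
  apply exists_control_F_eq_C h34 h42 hsum
  rintro _ ⟨k, hk, l, hl, rfl⟩
  rcases Nat.lt_succ_iff_lt_or_eq.1 hl with hl | rfl
  · obtain ⟨s, hs, hmem⟩ := exists_add_mem_rect (f := f) ha hk hl
    have hs0 : adj s 0 := by rcases hs with rfl | rfl; exacts [he, adj_neg_zero he]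
    exact ⟨_, adj_add_self hs0, hS hmem, Or.inl (hS ⟨k, hk, l, hl, rfl⟩)⟩
  · obtain ⟨l, rfl⟩ : ∃ l', l = l' + 2 := ⟨l - 2, by omega⟩
    obtain ⟨s, hs, hmem⟩ := exists_add_mem_rect (f := f) ha hk (Nat.lt_succ_self (l + 1))
    set u := v0 + k • e + (l + 1) • f
    have hs0 : adj s 0 := by rcases hs with rfl | rfl; exacts [he, adj_neg_zero he]
    have hdown : u + -f = v0 + k • e + l • f := by module
    have hne : u + -f ≠ u + s := by
      rw [Ne, add_right_inj]
      rcases hs with rfl | rfl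
      · exact fun h => hfne (neg_eq_iff_eq_neg.1 h)
      · exact fun h => hfe (neg_inj.1 h)
    refine ⟨u, ?_, hS ⟨k, hk, l + 1, by omega, rfl⟩, Or.inr ?_⟩
    · rw [adj_iff_adj_sub_zero, show u - (v0 + k • e + (l + 2) • f) = -f by module]
      exact adj_neg_zero hf
    · refine two_le_coopCount hne (adj_add_self (adj_neg_zero hf)) (adj_add_self hs0) ?_ (hS hmem)
      rw [hdown]
      exact hS ⟨k, hk, l, by omega, rfl⟩

end Rectangle

section Reachability

variable {p1 p2 p3 p4 : ℝ}

lemma isControl_add_one_zero : IsControl (fun v : Node N M => v + (1, 0)) :=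
  fun _ => adj_add_self (Or.inl (sub_zero _))

lemma ReachableWithin.of_mem {A : Set (Config N M)} {S : Config N M} (T : ℕ) (hS : S ∈ A) :
    ReachableWithin p1 p2 p3 p4 A S T :=
  ⟨0, Nat.zero_le T, fun _ => _, fun _ => isControl_add_one_zero, hS⟩

lemma traj_cons (S : Config N M) (c₀ : Node N M → Node N M) (c : ℕ → Node N M → Node N M) :
    ∀ t, traj p1 p2 p3 p4 S (Nat.rec c₀ fun n _ => c n) (t + 1) =
      traj p1 p2 p3 p4 (F p1 p2 p3 p4 S c₀) c t
  | 0 => rfl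
  | t + 1 => by rw [traj, traj_cons S c₀ c t]; rfl

lemma ReachableWithin.of_F {A : Set (Config N M)} {S : Config N M} {c₀ : Node N M → Node N M}
    {T : ℕ} (hc₀ : IsControl c₀) (h : ReachableWithin p1 p2 p3 p4 A (F p1 p2 p3 p4 S c₀) T) :
    ReachableWithin p1 p2 p3 p4 A S (T + 1) := by
  obtain ⟨t, ht, c, hc, hA⟩ := h
  refine ⟨t + 1, Nat.succ_le_succ ht, Nat.rec c₀ fun n _ => c n, ?_, ?_⟩
  · rintro (_ | n)
    exacts [hc₀, hc n]
  · rwa [traj_cons]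

lemma reachableWithin_allC_of_rect_subset (hN : 1 < N) (hM : 0 < M) (h34 : p4 < p3)
    (h42 : p2 < p4) (hsum : 2 * p3 < p1 + p2) (v0 : Node N M) (n : ℕ) :
    ∀ {a b : ℕ} {S : Config N M}, 2 ≤ a → 2 ≤ b → N - a + (M - b) ≤ n →
      rect v0 (1, 0) (0, 1) a b ⊆ {v | S v = .C} →
      ReachableWithin p1 p2 p3 p4 {fun _ => .C} S n := by
  have : NeZero N := ⟨by omega⟩
  have : NeZero M := ⟨by omega⟩
  have : Fact (1 < N) := ⟨hN⟩
  have he : adj ((1, 0) : Node N M) 0 := Or.inl (sub_zero _)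
  have hf : adj ((0, 1) : Node N M) 0 := Or.inr (Or.inr (Or.inl (sub_zero _)))
  have hfe : ((0, 1) : Node N M) ≠ (1, 0) := by simp [Prod.ext_iff]
  have hfne : ((0, 1) : Node N M) ≠ -(1, 0) := by simp [Prod.ext_iff]
  have hefne : ((1, 0) : Node N M) ≠ -(0, 1) := by simp [Prod.ext_iff]
  have hdone : ∀ {n a b : ℕ} {S : Config N M}, N ≤ a → M ≤ b →
      rect v0 (1, 0) (0, 1) a b ⊆ {v | S v = .C} →
      ReachableWithin p1 p2 p3 p4 {fun _ => .C} S n := fun ha hb hS =>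
    .of_mem _ (funext fun v => hS (rect_eq_univ v0 ha hb ▸ Set.mem_univ v))
  induction n with
  | zero => exact fun _ _ hn hS => hdone (by omega) (by omega) hS
  | succ n ih =>
    intro a b S ha hb hn hS
    by_cases hab : N ≤ a ∧ M ≤ b
    · exact hdone hab.1 hab.2 hS
    rcases not_and_or.1 hab with ha' | hb'
    · rw [rect_comm] at hS
      obtain ⟨c, hc, hF⟩ := exists_control_rect_succ h34 h42 hsum hf he hfe.symm hefne hb ha hS
      rw [← rect_comm] at hF
      exact .of_F hc (ih (by omega) hb (by omega) hF)
    · obtain ⟨c, hc, hF⟩ := exists_control_rect_succ h34 h42 hsum he hf hfe hfne ha hb hS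
      exact .of_F hc (ih ha (by omega) (by omega) hF)

end Reachability

theorem staghunt_reachable_coop_general {N M : ℕ} (hN : 3 ≤ N) (hM : 3 ≤ M)
    (p1 p2 p3 p4 : ℝ) (h34 : p3 > p4) (h42 : p4 > p2)
    (hsum : p1 + p2 > 2 * p3)
    (S0 : Config N M)
    (hsq : ∃ v : Node N M, S0 v = Strat.C ∧ S0 (v + (1, 0)) = Strat.C ∧
      S0 (v + (0, 1)) = Strat.C ∧ S0 (v + (1, 1)) = Strat.C) :
    ReachableWithin p1 p2 p3 p4 ({fun _ => Strat.C} : Set (Config N M)) S0 (N + M) := by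
  obtain ⟨v, h00, h10, h01, h11⟩ := hsq
  have hsquare : rect v (1, 0) (0, 1) 2 2 ⊆ {w | S0 w = .C} := by
    rintro _ ⟨k, hk, l, hl, rfl⟩
    interval_cases k <;> interval_cases l <;> simpa [add_assoc]
  exact reachableWithin_allC_of_rect_subset (by omega) (by omega) h34 h42 hsum v (N + M)
    le_rfl le_rfl (by omega) hsquare

/-- under the stag hunt conditions, if the initial configuration
contains a square of four cooperators, the all-cooperation configuration is
reachable under the CEG within `N + M` steps. -/
theorem staghunt_reachable_coop {N M : ℕ} (hN : 3 ≤ N) (hM : 3 ≤ M)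
    (p1 p2 p3 p4 : ℝ) (h13 : p1 > p3) (h34 : p3 > p4) (h42 : p4 > p2)
    (hsum : p1 + p2 > 2 * p3)
    (S0 : Config N M)
    (hsq : ∃ v : Node N M, S0 v = Strat.C ∧ S0 (v + (1, 0)) = Strat.C ∧
      S0 (v + (0, 1)) = Strat.C ∧ S0 (v + (1, 1)) = Strat.C) :
    ReachableWithin p1 p2 p3 p4 ({fun _ => Strat.C} : Set (Config N M)) S0 (N + M) :=
  staghunt_reachable_coop_general hN hM p1 p2 p3 p4 h34 h42 hsum S0 hsq

end EvolGame
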